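/- Let T1, T2, T3 be pairwise disjoint pseudotrees with T1 mergeable to T2, and suppose V(T1) ∩ V(T3) = ∅. Then merging T1 into T2 does not change the mergeability between T2 and T3: the union T = (V(T1) ∪ V(T2), E(T1) ∪ E(T2)) is mergeable to T3 if and only if T2 is mergeable to T3, T3 is mergeable to T if and only if T3 is mergeable to T2, and V(T) ∩ V(T3) = ∅ if and only if V(T2) ∩ V(T3) = ∅. -/

import Mathlib

/-- A finite simple directed graph: a finite vertex set, a finite set of directed
edges (ordered pairs) between vertices, with no self-loops. Since `edges` is a
`Finset`, there are no repeated edges. -/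
structure FinDigraph (V : Type*) [DecidableEq V] where
  verts : Finset V
  edges : Finset (V × V)
  mem_fst : ∀ e ∈ edges, e.1 ∈ verts
  mem_snd : ∀ e ∈ edges, e.2 ∈ verts
  no_loops : ∀ e ∈ edges, e.1 ≠ e.2

namespace FinDigraph

variable {V : Type*} [DecidableEq V]

/-- Adjacency in the underlying undirected graph. -/
def Adj (G : FinDigraph V) (a b : V) : Prop := (a, b) ∈ G.edges ∨ (b, a) ∈ G.edges

/-- `G` is connected if its underlying undirected graph is connected. -/
def Connected (G : FinDigraph V) : Prop :=
  G.verts.Nonempty ∧ ∀ u ∈ G.verts, ∀ v ∈ G.verts, Relation.ReflTransGen G.Adj u v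

/-- The set of in-neighbors of `j`. -/
def inNbrs (G : FinDigraph V) (j : V) : Finset V := G.verts.filter fun i => (i, j) ∈ G.edges

/-- The set of out-neighbors of `j`. -/
def outNbrs (G : FinDigraph V) (j : V) : Finset V := G.verts.filter fun i => (j, i) ∈ G.edges

/-- The sinks of `G`: vertices without out-neighbors. -/
def sinks (G : FinDigraph V) : Finset V := G.verts.filter fun j => G.outNbrs j = ∅

/-- The sources of `G`: vertices without in-neighbors. -/
def sources (G : FinDigraph V) : Finset V := G.verts.filter fun j => G.inNbrs j = ∅

def IsSubgraph (H G : FinDigraph V) : Prop := H.verts ⊆ G.verts ∧ H.edges ⊆ G.edges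

/-- A (directed) pseudotree: a connected simple directed graph with at least two
vertices in which every vertex has at most one in-neighbor. -/
def IsPseudotree (T : FinDigraph V) : Prop :=
  T.Connected ∧ 2 ≤ T.verts.card ∧ ∀ j ∈ T.verts, (T.inNbrs j).card ≤ 1

/-- An anti-pseudotree: a connected simple directed graph with at least two
vertices in which every vertex has at most one out-neighbor. -/
def IsAntiPseudotree (T : FinDigraph V) : Prop :=
  T.Connected ∧ 2 ≤ T.verts.card ∧ ∀ j ∈ T.verts, (T.outNbrs j).card ≤ 1

/-- `l` is the list of vertices visited by a directed path from `u` to `v`: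
consecutive vertices are joined by directed edges, and no vertex repeats. -/
def IsPath (G : FinDigraph V) (u v : V) (l : List V) : Prop :=
  l ≠ [] ∧ l.Chain' (fun a b => (a, b) ∈ G.edges) ∧ l.Nodup ∧
    l.head? = some u ∧ l.getLast? = some v

/-- `r` is a root of `T` if there is exactly one directed path from `r`
to every other vertex of `T`. -/
def IsRoot (T : FinDigraph V) (r : V) : Prop :=
  r ∈ T.verts ∧ ∀ v ∈ T.verts, v ≠ r → ∃! l : List V, T.IsPath r v l

/-- `Υ(T)`: the set of roots of `T`. -/
def roots (T : FinDigraph V) : Set V := {r | T.IsRoot r}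

/-- A leaf: a vertex of `T` without out-neighbors in `T`. -/
def IsLeaf (T : FinDigraph V) (v : V) : Prop := v ∈ T.verts ∧ T.outNbrs v = ∅

/-- The edges of `E` outgoing from `j`. -/
def outEdges (E : Finset (V × V)) (j : V) : Finset (V × V) := E.filter fun e => e.1 = j

/-- The edges of `E` incoming to (ending at) `j`. -/
def inEdges (E : Finset (V × V)) (j : V) : Finset (V × V) := E.filter fun e => e.2 = j

/-- Two pseudotrees are disjoint if (1) they share no edges and (2) for every
vertex of their union, all outgoing edges (within the union of the edge sets)
belong to one and the same pseudotree. -/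
def DisjointPTrees (T1 T2 : FinDigraph V) : Prop :=
  T1.edges ∩ T2.edges = ∅ ∧
  ∀ j ∈ T1.verts ∪ T2.verts,
    outEdges (T1.edges ∪ T2.edges) j ⊆ T1.edges ∨
    outEdges (T1.edges ∪ T2.edges) j ⊆ T2.edges

/-- Two anti-pseudotrees are disjoint if they share no edges and, for every
vertex of their union, all incoming edges of that vertex are in a single one
of the two anti-pseudotrees. -/
def DisjointAntiPTrees (T1 T2 : FinDigraph V) : Prop :=
  T1.edges ∩ T2.edges = ∅ ∧
  ∀ j ∈ T1.verts ∪ T2.verts,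
    inEdges (T1.edges ∪ T2.edges) j ⊆ T1.edges ∨
    inEdges (T1.edges ∪ T2.edges) j ⊆ T2.edges

/-- The union of two digraphs. -/
def union (T1 T2 : FinDigraph V) : FinDigraph V where
  verts := T1.verts ∪ T2.verts
  edges := T1.edges ∪ T2.edges
  mem_fst := fun e he => by
    rcases Finset.mem_union.mp he with h | h
    · exact Finset.mem_union_left _ (T1.mem_fst e h)
    · exact Finset.mem_union_right _ (T2.mem_fst e h)
  mem_snd := fun e he => by
    rcases Finset.mem_union.mp he with h | h
    · exact Finset.mem_union_left _ (T1.mem_snd e h)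
    · exact Finset.mem_union_right _ (T2.mem_snd e h)
  no_loops := fun e he => by
    rcases Finset.mem_union.mp he with h | h
    · exact T1.no_loops e h
    · exact T2.no_loops e h

/-- `T1` is mergeable to `T2`: they are disjoint pseudotrees sharing a vertex,
their union graph is a pseudotree, and there is a directed path (in the union)
from every root of `T2` to every vertex of `T1`. -/
def Mergeable (T1 T2 : FinDigraph V) : Prop :=
  DisjointPTrees T1 T2 ∧ (T1.verts ∩ T2.verts).Nonempty ∧
  IsPseudotree (union T1 T2) ∧
  ∀ r ∈ roots T2, ∀ v ∈ T1.verts, ∃ l : List V, (union T1 T2).IsPath r v l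

/-- The minimal star pseudotree rooted at `j`: vertex `j` together with all its
out-neighbors in `G`, and all the edges of `G` outgoing from `j`. -/
def star (G : FinDigraph V) (j : V) : FinDigraph V where
  verts := insert j (G.outNbrs j)
  edges := G.edges.filter fun e => e.1 = j
  mem_fst := fun e he => by
    have h := Finset.mem_filter.mp he
    simp [h.2]
  mem_snd := fun e he => by
    have h := Finset.mem_filter.mp he
    have h2 : e.2 ∈ G.outNbrs j := by
      refine Finset.mem_filter.mpr ⟨G.mem_snd e h.1, ?_⟩
      have he' : e = (j, e.2) := by
        obtain ⟨a, b⟩ := e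
        simp only at h ⊢
        rw [h.2]
      rw [← he']
      exact h.1
    exact Finset.mem_insert_of_mem h2
  no_loops := fun e he => G.no_loops e (Finset.mem_filter.mp he).1

/-- The minimal anti-star rooted at `j`: vertex `j` together with all its
in-neighbors in `G`, and all the edges of `G` incoming to `j`. -/
def antiStar (G : FinDigraph V) (j : V) : FinDigraph V where
  verts := insert j (G.inNbrs j)
  edges := G.edges.filter fun e => e.2 = j
  mem_fst := fun e he => by
    have h := Finset.mem_filter.mp he
    have h2 : e.1 ∈ G.inNbrs j := by
      refine Finset.mem_filter.mpr ⟨G.mem_fst e h.1, ?_⟩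
      have he' : e = (e.1, j) := by
        obtain ⟨a, b⟩ := e
        simp only at h ⊢
        rw [h.2]
      rw [← he']
      exact h.1
    exact Finset.mem_insert_of_mem h2
  mem_snd := fun e he => by
    have h := Finset.mem_filter.mp he
    simp [h.2]
  no_loops := fun e he => G.no_loops e (Finset.mem_filter.mp he).1

end FinDigraph

/-- The three-element set `𝕄 = {1, 0, ∅}`. -/
inductive MSym : Type
  | one
  | zero
  | emp
deriving DecidableEq

/-- The commutative operator `⊙` on `𝕄`:
`1⊙1 = 1`, `1⊙0 = 0`, `1⊙∅ = 1`, `0⊙0 = 0`, `∅⊙0 = 0`, `∅⊙∅ = ∅`. -/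
def modot : MSym → MSym → MSym
  | .zero, _ => .zero
  | _, .zero => .zero
  | .one, _ => .one
  | _, .one => .one
  | .emp, .emp => .emp

open Classical in
/-- The characteristic matrix of a (disjoint pseudotree) covering `T`:
entry `(i,j)` is `1` if `T i` is mergeable to `T j`, `∅` if they share no
vertices, and `0` otherwise. -/
noncomputable def charMat {V : Type*} [DecidableEq V] {ι : Type*} (T : ι → FinDigraph V) :
    ι → ι → MSym := fun i j =>
  if FinDigraph.Mergeable (T i) (T j) then .one
  else if (T i).verts ∩ (T j).verts = ∅ then .emp
  else .zero

/-- The reduction `F(M, i, j)`: replace row `j` by (row `i`) ⊙ (row `j`),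
replace column `j` by (column `i`) ⊙ (column `j`), then delete row and
column `i`. -/
def reduceF {n : ℕ} (M : Fin n → Fin n → MSym) (i j : Fin n) :
    {k : Fin n // k ≠ i} → {k : Fin n // k ≠ i} → MSym := fun a b =>
  let M1 : Fin n → Fin n → MSym := fun p q => if p = j then modot (M i q) (M j q) else M p q
  let M2 : Fin n → Fin n → MSym := fun p q => if q = j then modot (M1 p i) (M1 p j) else M1 p q
  M2 a.val b.val

namespace FinDigraph

variable {V : Type*} [DecidableEq V]

/-- Reachability along directed edges. -/
def Rch (G : FinDigraph V) : V → V → Prop :=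
  Relation.ReflTransGen (fun a b => (a, b) ∈ G.edges)

lemma ext' (G H : FinDigraph V) (h1 : G.verts = H.verts) (h2 : G.edges = H.edges) :
    G = H := by
  cases G; cases H; simp_all

lemma union_comm' (A B : FinDigraph V) : union A B = union B A :=
  ext' _ _ (Finset.union_comm _ _) (Finset.union_comm _ _)

lemma rch_mono {G H : FinDigraph V} (h : G.edges ⊆ H.edges) {u v : V}
    (hr : G.Rch u v) : H.Rch u v :=
  Relation.ReflTransGen.mono (fun _ _ he => h he) _ _ hr

lemma isPath_mono {G H : FinDigraph V} (h : G.edges ⊆ H.edges) {u v : V} {l : List V}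
    (hp : G.IsPath u v l) : H.IsPath u v l :=
  ⟨hp.1, hp.2.1.imp (fun _ _ he => h he), hp.2.2⟩

lemma isPath_rch {G : FinDigraph V} {u v : V} {l : List V} (hp : G.IsPath u v l) :
    G.Rch u v := by
  obtain ⟨hne, hc, hnd, hh, hl⟩ := hp
  clear hnd
  induction l generalizing u with
  | nil => simp at hne
  | cons a t ih =>
    simp only [List.head?_cons, Option.some.injEq] at hh
    subst hh
    cases t with
    | nil =>
      simp at hl; subst hl; exact Relation.ReflTransGen.refl
    | cons b t' =>
      replace hc := List.isChain_cons_cons.mp hc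
      refine Relation.ReflTransGen.head hc.1 (ih (by simp) hc.2 rfl ?_)
      simpa using hl

lemma rch_isPath {G : FinDigraph V} {u v : V} (hr : G.Rch u v) :
    ∃ l, G.IsPath u v l := by
  induction hr using Relation.ReflTransGen.head_induction_on with
  | refl => exact ⟨[v], by simp, List.IsChain.singleton _, by simp, by simp, by simp⟩
  | head he hr ih =>
    rename_i a c
    obtain ⟨l, hne, hc, hnd, hh, hl⟩ := ih
    by_cases hmem : a ∈ l
    · obtain ⟨s, t, rfl⟩ := List.append_of_mem hmem
      refine ⟨a :: t, by simp, ?_, ?_, by simp, ?_⟩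
      · exact hc.suffix ⟨s, rfl⟩
      · exact (List.nodup_append.mp hnd).2.1
      · rw [List.getLast?_append] at hl
        rcases h' : (a :: t).getLast? with _ | x
        · simp at h'
        · rw [h', Option.some_or] at hl; exact hl
    · refine ⟨a :: l, by simp, ?_, by simp [hnd, hmem], by simp, ?_⟩
      · refine List.isChain_cons.mpr ?_
        exact ⟨fun y hy => by cases l with
          | nil => simp at hne
          | cons b t => simp at hy hh; subst hy hh; exact he, hc⟩
      · cases l with
        | nil => simp at hne
        | cons b t => rw [List.getLast?_cons_cons]; exact hl

/-- in-neighbor uniqueness form of the in-degree condition. -/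
def Uniq (G : FinDigraph V) : Prop :=
  ∀ x y j : V, (x, j) ∈ G.edges → (y, j) ∈ G.edges → x = y

lemma uniq_of_indeg {G : FinDigraph V} (h : ∀ j ∈ G.verts, (G.inNbrs j).card ≤ 1) :
    G.Uniq := by
  intro x y j hx hy
  have hj : j ∈ G.verts := G.mem_snd _ hx
  have hx' : x ∈ G.inNbrs j := Finset.mem_filter.mpr ⟨G.mem_fst _ hx, hx⟩
  have hy' : y ∈ G.inNbrs j := Finset.mem_filter.mpr ⟨G.mem_fst _ hy, hy⟩
  exact Finset.card_le_one.mp (h j hj) x hx' y hy'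

lemma indeg_of_uniq {G : FinDigraph V} (h : G.Uniq) :
    ∀ j ∈ G.verts, (G.inNbrs j).card ≤ 1 := by
  intro j _
  refine Finset.card_le_one.mpr fun a ha b hb => ?_
  exact h a b j (Finset.mem_filter.mp ha).2 (Finset.mem_filter.mp hb).2

lemma rch_tail' {G : FinDigraph V} {u v : V} (hr : G.Rch u v) (hne : u ≠ v) :
    ∃ c, G.Rch u c ∧ (c, v) ∈ G.edges := by
  rcases Relation.ReflTransGen.cases_tail hr with h | h
  · exact absurd h.symm hne
  · exact h

end FinDigraph
namespace FinDigraph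

variable {V : Type*} [DecidableEq V]

lemma uniq_mono {G H : FinDigraph V} (h : H.edges ⊆ G.edges) (hG : G.Uniq) : H.Uniq :=
  fun x y j hx hy => hG x y j (h hx) (h hy)

lemma isPath_concat {G : FinDigraph V} {r v : V} {l' : List V}
    (h : G.IsPath r v (l' ++ [v])) (hne : l' ≠ []) :
    ∃ c, l'.getLast? = some c ∧ (c, v) ∈ G.edges ∧ G.IsPath r c l' := by
  obtain ⟨-, hc, hnd, hh, -⟩ := h
  refine ⟨l'.getLast hne, List.getLast?_eq_getLast hne, ?_, hne, ?_, ?_, ?_, ?_⟩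
  · replace hc := List.isChain_append.mp hc
    exact hc.2.2 _ (List.getLast?_eq_getLast hne) v rfl
  · exact (List.isChain_append.mp hc).1
  · exact (List.nodup_append.mp hnd).1
  · rw [List.head?_append_of_ne_nil _ hne] at hh; exact hh
  · exact List.getLast?_eq_getLast hne

lemma path_unique {G : FinDigraph V} (hU : G.Uniq) :
    ∀ (n : ℕ) {l1 l2 : List V} {r v : V}, l1.length ≤ n →
      G.IsPath r v l1 → G.IsPath r v l2 → l1 = l2 := by
  intro n
  induction n with
  | zero =>
    intro l1 l2 r v hlen h1 _
    cases l1 with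
    | nil => exact absurd rfl h1.1
    | cons a t => simp at hlen
  | succ n ih =>
    intro l1 l2 r v hlen h1 h2
    rcases List.eq_nil_or_concat l1 with rfl | ⟨l1', a1, rfl⟩
    · exact absurd rfl h1.1
    rcases List.eq_nil_or_concat l2 with rfl | ⟨l2', a2, rfl⟩
    · exact absurd rfl h2.1
    simp only [List.concat_eq_append] at h1 h2 hlen ⊢
    have ha1 : a1 = v := by
      have := h1.2.2.2.2; rw [List.getLast?_append] at this; simpa using this
    have ha2 : a2 = v := by
      have := h2.2.2.2.2; rw [List.getLast?_append] at this; simpa using this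
    subst ha1; subst ha2
    have hv_nd1 : a2 ∉ l1' := by
      have := h1.2.2.1; rw [List.nodup_append'] at this
      intro hm; exact this.2.2 hm (by simp)
    have hv_nd2 : a2 ∉ l2' := by
      have := h2.2.2.1; rw [List.nodup_append'] at this
      intro hm; exact this.2.2 hm (by simp)
    by_cases he1 : l1' = []
    · subst he1
      have hrv : r = a2 := by simpa using (h1.2.2.2.1).symm
      by_cases he2 : l2' = []
      · subst he2; rfl
      · exfalso
        have hh2 : l2'.head? = some r := by
          have := h2.2.2.2.1; rwa [List.head?_append_of_ne_nil _ he2] at this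
        apply hv_nd2
        rw [← hrv]
        exact List.mem_of_mem_head? (by rw [hh2]; simp)
    · by_cases he2 : l2' = []
      · exfalso
        subst he2
        have hrv : r = a2 := by simpa using (h2.2.2.2.1).symm
        have hh1 : l1'.head? = some r := by
          have := h1.2.2.2.1; rwa [List.head?_append_of_ne_nil _ he1] at this
        apply hv_nd1
        rw [← hrv]
        exact List.mem_of_mem_head? (by rw [hh1]; simp)
      · obtain ⟨c1, hg1, hc1, hp1⟩ := isPath_concat h1 he1
        obtain ⟨c2, hg2, hc2, hp2⟩ := isPath_concat h2 he2
        have hcc : c1 = c2 := hU c1 c2 a2 hc1 hc2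
        subst hcc
        have hlen' : l1'.length ≤ n := by
          have : l1'.length + 1 ≤ n + 1 := by simpa using hlen
          omega
        rw [ih hlen' hp1 hp2]

lemma root_rch {G : FinDigraph V} {r : V} (hr : G.IsRoot r) :
    ∀ v ∈ G.verts, G.Rch r v := by
  intro v hv
  by_cases hvr : v = r
  · subst hvr; exact Relation.ReflTransGen.refl
  · obtain ⟨l, hl, -⟩ := hr.2 v hv hvr
    exact isPath_rch hl

lemma isRoot_iff {G : FinDigraph V} (hU : G.Uniq) {r : V} :
    G.IsRoot r ↔ r ∈ G.verts ∧ ∀ v ∈ G.verts, G.Rch r v := by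
  constructor
  · exact fun h => ⟨h.1, root_rch h⟩
  · rintro ⟨h1, h2⟩
    refine ⟨h1, fun v hv _ => ?_⟩
    obtain ⟨l, hl⟩ := rch_isPath (h2 v hv)
    exact ⟨l, hl, fun l' hl' => path_unique hU l'.length le_rfl hl' hl⟩

lemma rch_total {G : FinDigraph V} (hU : G.Uniq) {u x y : V}
    (hx : G.Rch x u) (hy : G.Rch y u) : G.Rch x y ∨ G.Rch y x := by
  induction hx using Relation.ReflTransGen.head_induction_on with
  | refl => exact Or.inr hy
  | @head a c he _ ih =>
    rcases ih with h | h
    · exact Or.inl (Relation.ReflTransGen.head he h)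
    · by_cases hyc : y = c
      · subst hyc; exact Or.inl (Relation.ReflTransGen.single he)
      · obtain ⟨d, hyd, hdc⟩ := rch_tail' h hyc
        have : d = a := hU d a c hdc he
        subst this
        exact Or.inr hyd

lemma exists_bot {G : FinDigraph V} :
    ∀ S : Finset V, (∀ a ∈ S, ∀ b ∈ S, G.Rch a b ∨ G.Rch b a) → S.Nonempty →
      ∃ r ∈ S, ∀ x ∈ S, G.Rch r x := by
  intro S
  induction S using Finset.induction_on with
  | empty => intro _ h; simp at h
  | @insert a s ha ih =>
    intro htot _
    by_cases hs : s.Nonempty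
    · obtain ⟨r, hr, hmin⟩ := ih (fun x hx y hy =>
        htot x (Finset.mem_insert_of_mem hx) y (Finset.mem_insert_of_mem hy)) hs
      rcases htot r (Finset.mem_insert_of_mem hr) a (Finset.mem_insert_self a s) with h | h
      · refine ⟨r, Finset.mem_insert_of_mem hr, fun x hx => ?_⟩
        rcases Finset.mem_insert.mp hx with rfl | hx
        · exact h
        · exact hmin x hx
      · refine ⟨a, Finset.mem_insert_self a s, fun x hx => ?_⟩
        rcases Finset.mem_insert.mp hx with rfl | hx
        · exact Relation.ReflTransGen.refl
        · exact h.trans (hmin x hx)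
    · rw [Finset.not_nonempty_iff_eq_empty] at hs
      subst hs
      refine ⟨a, Finset.mem_insert_self a _, fun x hx => ?_⟩
      rcases Finset.mem_insert.mp hx with rfl | hx
      · exact Relation.ReflTransGen.refl
      · simp at hx

lemma exists_root {G : FinDigraph V} (hG : G.IsPseudotree) : ∃ r, G.IsRoot r := by
  classical
  have hU := uniq_of_indeg hG.2.2
  obtain ⟨u, hu⟩ := hG.1.1
  set S := G.verts.filter (fun w => G.Rch w u) with hS
  have huS : u ∈ S := Finset.mem_filter.mpr ⟨hu, Relation.ReflTransGen.refl⟩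
  obtain ⟨r, hrS, hmin⟩ := exists_bot S
    (fun a haS b hbS =>
      rch_total hU (Finset.mem_filter.mp haS).2 (Finset.mem_filter.mp hbS).2) ⟨u, huS⟩
  have hrv : r ∈ G.verts := (Finset.mem_filter.mp hrS).1
  refine ⟨r, (isRoot_iff hU).mpr ⟨hrv, fun v hv => ?_⟩⟩
  have hadj : Relation.ReflTransGen G.Adj u v := hG.1.2 u hu v hv
  clear hv
  induction hadj with
  | refl => exact hmin u huS
  | @tail b c _ hstep ih =>
    rcases hstep with he | he
    · exact Relation.ReflTransGen.tail ih he
    · -- he : (c, b) ∈ G.edges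
      by_cases hrb : r = b
      · subst hrb
        have hcS : c ∈ S := Finset.mem_filter.mpr
          ⟨G.mem_fst _ he, (Relation.ReflTransGen.single he).trans (Finset.mem_filter.mp hrS).2⟩
        exact hmin c hcS
      · obtain ⟨d, hrd, hdb⟩ := rch_tail' ih hrb
        have : d = c := hU d c b hdb he
        subst this
        exact hrd

lemma root_out_edge {G : FinDigraph V} (hG : G.IsPseudotree) {r : V} (hr : G.IsRoot r) :
    ∃ c, (r, c) ∈ G.edges := by
  obtain ⟨a, haV, b, hbV, hab⟩ := Finset.one_lt_card.mp hG.2.1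
  have : ∃ v ∈ G.verts, v ≠ r := by
    by_cases har : a = r
    · exact ⟨b, hbV, by rw [← har]; exact fun h => hab h.symm⟩
    · exact ⟨a, haV, har⟩
  obtain ⟨v, hvV, hvr⟩ := this
  have := root_rch hr v hvV
  rcases Relation.ReflTransGen.cases_head this with h | ⟨c, hc, -⟩
  · exact absurd h.symm hvr
  · exact ⟨c, hc⟩

lemma union_connected {A B : FinDigraph V} (hA : A.Connected) (hB : B.Connected)
    (hx : (A.verts ∩ B.verts).Nonempty) : (union A B).Connected := by
  obtain ⟨x, hx'⟩ := hx
  have hxA := (Finset.mem_inter.mp hx').1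
  have hxB := (Finset.mem_inter.mp hx').2
  have hsymm : Symmetric (union A B).Adj := fun a b h => h.elim Or.inr Or.inl
  have adjA : ∀ {a b}, A.Adj a b → (union A B).Adj a b := fun h =>
    h.elim (fun h => Or.inl (Finset.mem_union_left _ h)) (fun h => Or.inr (Finset.mem_union_left _ h))
  have adjB : ∀ {a b}, B.Adj a b → (union A B).Adj a b := fun h =>
    h.elim (fun h => Or.inl (Finset.mem_union_right _ h)) (fun h => Or.inr (Finset.mem_union_right _ h))
  have reach_x : ∀ u ∈ (union A B).verts, Relation.ReflTransGen (union A B).Adj u x := by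
    intro u hu
    rcases Finset.mem_union.mp hu with h | h
    · exact Relation.ReflTransGen.mono (fun _ _ => adjA) _ _ (hA.2 u h x hxA)
    · exact Relation.ReflTransGen.mono (fun _ _ => adjB) _ _ (hB.2 u h x hxB)
  refine ⟨⟨x, Finset.mem_union_left _ hxA⟩, fun u hu v hv => ?_⟩
  exact (reach_x u hu).trans (by haveI : Std.Symm (union A B).Adj := ⟨fun a b h => hsymm h⟩; exact Std.Symm.symm _ _ (reach_x v hv))

lemma cycle_lem {U T : FinDigraph V} (hTU : T.edges ⊆ U.edges) (hU : U.Uniq)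
    {a w : V} (haw : (a, w) ∈ T.edges) (hwa : T.Rch w a) :
    ∀ x, U.Rch x w → x = w ∨ (T.Rch w x ∧ ∃ y, (x, y) ∈ T.edges) := by
  intro x hx
  induction hx using Relation.ReflTransGen.head_induction_on with
  | refl => exact Or.inl rfl
  | @head p q he _ ih =>
    right
    rcases ih with rfl | ⟨hwq, -⟩
    · have : p = a := hU p a q he (hTU haw)
      subst this
      exact ⟨hwa, q, haw⟩
    · by_cases hqw : q = w
      · subst hqw
        have : p = a := hU p a q he (hTU haw)
        subst this
        exact ⟨hwa, q, haw⟩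
      · obtain ⟨c, hwc, hcq⟩ := rch_tail' hwq (fun h => hqw h.symm)
        have : p = c := hU p c q he (hTU hcq)
        subst this
        exact ⟨hwc, q, hcq⟩

lemma disjoint_symm {A B : FinDigraph V} (h : DisjointPTrees A B) : DisjointPTrees B A := by
  obtain ⟨h1, h2⟩ := h
  constructor
  · rw [Finset.inter_comm]; exact h1
  · intro j hj
    rw [Finset.union_comm B.edges A.edges]
    exact (h2 j (by rwa [Finset.union_comm])).symm

end FinDigraph
namespace FinDigraph

variable {V : Type*} [DecidableEq V]

lemma disjoint_union_left {T1 T2 T3 : FinDigraph V}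
    (hd12 : DisjointPTrees T1 T2) (hd13 : DisjointPTrees T1 T3)
    (hd23 : DisjointPTrees T2 T3) :
    DisjointPTrees (union T1 T2) T3 := by
  have h13 : ∀ {e : V × V}, e ∈ T1.edges → e ∈ T3.edges → False := fun h1 h3 => by
    have := Finset.mem_inter.mpr ⟨h1, h3⟩; rw [hd13.1] at this; exact Finset.notMem_empty _ this
  have h23 : ∀ {e : V × V}, e ∈ T2.edges → e ∈ T3.edges → False := fun h2 h3 => by
    have := Finset.mem_inter.mpr ⟨h2, h3⟩; rw [hd23.1] at this; exact Finset.notMem_empty _ this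
  constructor
  · rw [Finset.eq_empty_iff_forall_notMem]
    intro e he
    have h1 := Finset.mem_inter.mp he
    rcases Finset.mem_union.mp h1.1 with h | h
    · exact h13 h h1.2
    · exact h23 h h1.2
  · intro j _
    by_cases h3 : outEdges ((union T1 T2).edges ∪ T3.edges) j ⊆ T3.edges
    · exact Or.inr h3
    · left
      obtain ⟨e, he, hne3⟩ := Finset.not_subset.mp h3
      have he' := Finset.mem_filter.mp he
      have heU : e ∈ T1.edges ∪ T2.edges := by
        rcases Finset.mem_union.mp he'.1 with h | h
        · exact h
        · exact absurd h hne3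
      intro f hf
      have hf' := Finset.mem_filter.mp hf
      rcases Finset.mem_union.mp hf'.1 with hfU | hf3
      · exact hfU
      · exfalso
        rcases Finset.mem_union.mp heU with he1 | he2
        · have hjV : j ∈ T1.verts ∪ T3.verts :=
            Finset.mem_union_left _ (by rw [← he'.2]; exact T1.mem_fst _ he1)
          rcases hd13.2 j hjV with hsub | hsub
          · have : f ∈ T1.edges :=
              hsub (Finset.mem_filter.mpr ⟨Finset.mem_union_right _ hf3, hf'.2⟩)
            exact h13 this hf3
          · have : e ∈ T3.edges :=
              hsub (Finset.mem_filter.mpr ⟨Finset.mem_union_left _ he1, he'.2⟩)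
            exact hne3 this
        · have hjV : j ∈ T2.verts ∪ T3.verts :=
            Finset.mem_union_left _ (by rw [← he'.2]; exact T2.mem_fst _ he2)
          rcases hd23.2 j hjV with hsub | hsub
          · have : f ∈ T2.edges :=
              hsub (Finset.mem_filter.mpr ⟨Finset.mem_union_right _ hf3, hf'.2⟩)
            exact h23 this hf3
          · have : e ∈ T3.edges :=
              hsub (Finset.mem_filter.mpr ⟨Finset.mem_union_left _ he2, he'.2⟩)
            exact hne3 this

end FinDigraph
open FinDigraph

/-- let `T1, T2, T3` be pairwise disjoint pseudotrees with `T1`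
mergeable to `T2` and `V(T1) ∩ V(T3) = ∅`. Then merging `T1` into `T2` does not
change the mergeability (or vertex-overlap) between `T2` and `T3`. -/
theorem statement_15 {V : Type*} [DecidableEq V] (T1 T2 T3 : FinDigraph V)
    (h1 : T1.IsPseudotree) (h2 : T2.IsPseudotree) (h3 : T3.IsPseudotree)
    (hd12 : FinDigraph.DisjointPTrees T1 T2)
    (hd13 : FinDigraph.DisjointPTrees T1 T3)
    (hd23 : FinDigraph.DisjointPTrees T2 T3)
    (hm : FinDigraph.Mergeable T1 T2)
    (hv : T1.verts ∩ T3.verts = ∅) :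
    (FinDigraph.Mergeable (FinDigraph.union T1 T2) T3 ↔ FinDigraph.Mergeable T2 T3) ∧
    (FinDigraph.Mergeable T3 (FinDigraph.union T1 T2) ↔ FinDigraph.Mergeable T3 T2) ∧
    ((FinDigraph.union T1 T2).verts ∩ T3.verts = ∅ ↔ T2.verts ∩ T3.verts = ∅) := by
  have hTps : (union T1 T2).IsPseudotree := hm.2.2.1
  have hUniqT : (union T1 T2).Uniq := uniq_of_indeg hTps.2.2
  have hUniq3 : T3.Uniq := uniq_of_indeg h3.2.2
  have hv13 : ∀ {x : V}, x ∈ T1.verts → x ∈ T3.verts → False := fun hx hy => by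
    have := Finset.mem_inter.mpr ⟨hx, hy⟩; rw [hv] at this; exact Finset.notMem_empty _ this
  have hE12 : ∀ {e : V × V}, e ∈ T1.edges → e ∈ T2.edges → False := fun ha hb => by
    have := Finset.mem_inter.mpr ⟨ha, hb⟩; rw [hd12.1] at this; exact Finset.notMem_empty _ this
  have fact2 : ∀ {ρ x c : V}, T2.IsRoot ρ → x ∈ T2.verts → (c, x) ∈ T1.edges → ρ = x := by
    intro ρ x c hρ hx hcx
    by_contra hne
    obtain ⟨l, hl, -⟩ := hρ.2 x hx (fun h => hne h.symm)
    obtain ⟨q, -, hq⟩ := rch_tail' (isPath_rch hl) hne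
    have : c = q := hUniqT c q x (Finset.mem_union_left _ hcx) (Finset.mem_union_right _ hq)
    subst this
    exact hE12 hcx hq
  obtain ⟨ρ0, hρ0⟩ := exists_root h2
  have hρ0v : ρ0 ∈ T2.verts := hρ0.1
  have hdU : DisjointPTrees (union T1 T2) T3 := disjoint_union_left hd12 hd13 hd23
  have key : (union T1 T2).verts ∩ T3.verts = T2.verts ∩ T3.verts := by
    ext x
    simp only [Finset.mem_inter]
    constructor
    · rintro ⟨hx, hx3⟩
      rcases Finset.mem_union.mp hx with h | h
      · exact absurd hx3 (fun hh => hv13 h hh)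
      · exact ⟨h, hx3⟩
    · rintro ⟨hx, hx3⟩
      exact ⟨Finset.mem_union_right _ hx, hx3⟩
  have key2 : T3.verts ∩ (union T1 T2).verts = T3.verts ∩ T2.verts := by
    rw [Finset.inter_comm, key, Finset.inter_comm]
  have e2T : T2.edges ⊆ (union T1 T2).edges := Finset.subset_union_right
  have e23U : (union T2 T3).edges ⊆ (union (union T1 T2) T3).edges :=
    Finset.union_subset_union e2T (subset_refl _)
  have e32W : (union T3 T2).edges ⊆ (union T3 (union T1 T2)).edges :=
    Finset.union_subset_union (subset_refl _) e2T
  have eTU : (union T1 T2).edges ⊆ (union (union T1 T2) T3).edges := Finset.subset_union_left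
  have eTW : (union T1 T2).edges ⊆ (union T3 (union T1 T2)).edges := Finset.subset_union_right
  refine ⟨⟨?_, ?_⟩, ⟨?_, ?_⟩, by rw [key]⟩
  · -- Mergeable (T1 ∪ T2) T3 → Mergeable T2 T3
    intro hM
    have hUniqU : (union (union T1 T2) T3).Uniq := uniq_of_indeg hM.2.2.1.2.2
    have hne : (T2.verts ∩ T3.verts).Nonempty := by
      have := hM.2.1; rwa [key] at this
    refine ⟨hd23, hne,
      ⟨union_connected h2.1 h3.1 hne,
        le_trans h2.2.1 (Finset.card_le_card Finset.subset_union_left),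
        indeg_of_uniq (uniq_mono e23U hUniqU)⟩, ?_⟩
    intro r3 hr3 v hv2
    have hr3' : T3.IsRoot r3 := hr3
    have hreach : (union (union T1 T2) T3).Rch r3 v := by
      obtain ⟨l, hl⟩ := hM.2.2.2 r3 hr3 v (Finset.mem_union_right _ hv2)
      exact isPath_rch hl
    suffices h : (union T2 T3).Rch r3 v from rch_isPath h
    have main : ∀ w, (union (union T1 T2) T3).Rch r3 w →
        w ∈ T2.verts ∪ T3.verts → (union T2 T3).Rch r3 w := by
      intro w hw
      induction hw with
      | refl => exact fun _ => Relation.ReflTransGen.refl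
      | @tail c w' hrc hcw ih =>
        intro hwm
        rcases Finset.mem_union.mp hcw with hA | h3e
        · rcases Finset.mem_union.mp hA with h1e | h2e
          · exfalso
            have hw1 : w' ∈ T1.verts := T1.mem_snd _ h1e
            have hw2 : w' ∈ T2.verts := by
              rcases Finset.mem_union.mp hwm with h | h
              · exact h
              · exact absurd h (fun hh => hv13 hw1 hh)
            have hwroot : T2.IsRoot w' := (fact2 hρ0 hw2 h1e) ▸ hρ0
            have hc1 : c ∈ T1.verts := T1.mem_fst _ h1e
            have hwc : (union T1 T2).Rch w' c := by
              obtain ⟨l, hl⟩ := hm.2.2.2 w' hwroot c hc1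
              exact isPath_rch hl
            have hcyc := cycle_lem eTU hUniqU
              (show (c, w') ∈ (union T1 T2).edges from Finset.mem_union_left _ h1e) hwc r3
              (Relation.ReflTransGen.tail hrc hcw)
            rcases hcyc with heq | ⟨-, y, hy⟩
            · rw [heq] at hr3'
              exact hv13 hw1 hr3'.1
            · obtain ⟨s', hs'⟩ := root_out_edge h3 hr3'
              rcases hM.1.2 r3 (Finset.mem_union_right _ hr3'.1) with hsub | hsub
              · have hin : (r3, s') ∈ (union T1 T2).edges :=
                  hsub (Finset.mem_filter.mpr ⟨Finset.mem_union_right _ hs', rfl⟩)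
                have := Finset.mem_inter.mpr ⟨hin, hs'⟩
                rw [hM.1.1] at this; exact Finset.notMem_empty _ this
              · have hin : (r3, y) ∈ T3.edges :=
                  hsub (Finset.mem_filter.mpr ⟨Finset.mem_union_left _ hy, rfl⟩)
                have := Finset.mem_inter.mpr ⟨hy, hin⟩
                rw [hM.1.1] at this; exact Finset.notMem_empty _ this
          · exact Relation.ReflTransGen.tail
              (ih (Finset.mem_union_left _ (T2.mem_fst _ h2e))) (Finset.mem_union_left _ h2e)
        · exact Relation.ReflTransGen.tail
            (ih (Finset.mem_union_right _ (T3.mem_fst _ h3e))) (Finset.mem_union_right _ h3e)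
    exact main v hreach (Finset.mem_union_left _ hv2)
  · -- Mergeable T2 T3 → Mergeable (T1 ∪ T2) T3
    intro hM'
    have hUniqU' : (union T2 T3).Uniq := uniq_of_indeg hM'.2.2.1.2.2
    have hne : ((union T1 T2).verts ∩ T3.verts).Nonempty := by
      rw [key]; exact hM'.2.1
    have tri : ∀ {x j : V}, (x, j) ∈ (union (union T1 T2) T3).edges →
        (x, j) ∈ T1.edges ∨ (x, j) ∈ T2.edges ∨ (x, j) ∈ T3.edges := by
      intro x j hx
      rcases Finset.mem_union.mp hx with hA | h
      · rcases Finset.mem_union.mp hA with h | h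
        · exact Or.inl h
        · exact Or.inr (Or.inl h)
      · exact Or.inr (Or.inr h)
    refine ⟨hdU, hne,
      ⟨union_connected hTps.1 h3.1 hne,
        le_trans h2.2.1 (Finset.card_le_card
          (subset_trans Finset.subset_union_right Finset.subset_union_left)),
        indeg_of_uniq ?_⟩, ?_⟩
    · intro x y j hx hy
      rcases tri hx with hx1 | hx2 | hx3 <;> rcases tri hy with hy1 | hy2 | hy3
      · exact hUniqT x y j (Finset.mem_union_left _ hx1) (Finset.mem_union_left _ hy1)
      · exact hUniqT x y j (Finset.mem_union_left _ hx1) (Finset.mem_union_right _ hy2)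
      · exact absurd (T3.mem_snd _ hy3) (fun hh => hv13 (T1.mem_snd _ hx1) hh)
      · exact hUniqT x y j (Finset.mem_union_right _ hx2) (Finset.mem_union_left _ hy1)
      · exact hUniqT x y j (Finset.mem_union_right _ hx2) (Finset.mem_union_right _ hy2)
      · exact hUniqU' x y j (Finset.mem_union_left _ hx2) (Finset.mem_union_right _ hy3)
      · exact absurd (T3.mem_snd _ hx3) (fun hh => hv13 (T1.mem_snd _ hy1) hh)
      · exact hUniqU' x y j (Finset.mem_union_right _ hx3) (Finset.mem_union_left _ hy2)
      · exact hUniq3 x y j hx3 hy3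
    · intro r3 hr3 v hvm
      have base : ∀ w ∈ T2.verts, (union (union T1 T2) T3).Rch r3 w := fun w hw => by
        obtain ⟨l, hl⟩ := hM'.2.2.2 r3 hr3 w hw
        exact rch_mono e23U (isPath_rch hl)
      rcases Finset.mem_union.mp hvm with hv1 | hv2
      · have hA : (union (union T1 T2) T3).Rch r3 ρ0 := base ρ0 hρ0v
        have hB : (union T1 T2).Rch ρ0 v := by
          obtain ⟨l, hl⟩ := hm.2.2.2 ρ0 hρ0 v hv1
          exact isPath_rch hl
        exact rch_isPath (hA.trans (rch_mono eTU hB))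
      · exact rch_isPath (base v hv2)
  · -- Mergeable T3 (T1 ∪ T2) → Mergeable T3 T2
    intro hM
    have hUniqW : (union T3 (union T1 T2)).Uniq := uniq_of_indeg hM.2.2.1.2.2
    have hne32 : (T3.verts ∩ T2.verts).Nonempty := by
      have := hM.2.1; rwa [key2] at this
    refine ⟨disjoint_symm hd23, hne32,
      ⟨union_connected h3.1 h2.1 hne32,
        le_trans h3.2.1 (Finset.card_le_card Finset.subset_union_left),
        indeg_of_uniq (uniq_mono e32W hUniqW)⟩, ?_⟩
    intro ρ hρm v3 hv3
    have hρ : T2.IsRoot ρ := hρm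
    have hρT : (union T1 T2).IsRoot ρ := by
      refine (isRoot_iff hUniqT).mpr ⟨Finset.mem_union_right _ hρ.1, fun w hw => ?_⟩
      rcases Finset.mem_union.mp hw with hw1 | hw2
      · obtain ⟨l, hl⟩ := hm.2.2.2 ρ hρ w hw1
        exact isPath_rch hl
      · exact rch_mono e2T (root_rch hρ w hw2)
    have hreach : (union T3 (union T1 T2)).Rch ρ v3 := by
      obtain ⟨l, hl⟩ := hM.2.2.2 ρ hρT v3 hv3
      exact isPath_rch hl
    suffices h : (union T3 T2).Rch ρ v3 from rch_isPath h
    have main : ∀ w, (union T3 (union T1 T2)).Rch ρ w →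
        w ∈ T2.verts ∪ T3.verts → (union T3 T2).Rch ρ w := by
      intro w hw
      induction hw with
      | refl => exact fun _ => Relation.ReflTransGen.refl
      | @tail c w' hrc hcw ih =>
        intro hwm
        rcases Finset.mem_union.mp hcw with h3e | hA
        · exact Relation.ReflTransGen.tail
            (ih (Finset.mem_union_right _ (T3.mem_fst _ h3e))) (Finset.mem_union_left _ h3e)
        · rcases Finset.mem_union.mp hA with h1e | h2e
          · have hw1 : w' ∈ T1.verts := T1.mem_snd _ h1e
            have hw2 : w' ∈ T2.verts := by
              rcases Finset.mem_union.mp hwm with h | h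
              · exact h
              · exact absurd h (fun hh => hv13 hw1 hh)
            have heq : ρ = w' := fact2 hρ hw2 h1e
            rw [← heq]
            exact Relation.ReflTransGen.refl
          · exact Relation.ReflTransGen.tail
              (ih (Finset.mem_union_left _ (T2.mem_fst _ h2e))) (Finset.mem_union_right _ h2e)
    exact main v3 hreach (Finset.mem_union_right _ hv3)
  · -- Mergeable T3 T2 → Mergeable T3 (T1 ∪ T2)
    intro hM'
    have hUniqU2 : (union T3 T2).Uniq := uniq_of_indeg hM'.2.2.1.2.2
    have hne3T : (T3.verts ∩ (union T1 T2).verts).Nonempty := by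
      rw [key2]; exact hM'.2.1
    have tri : ∀ {x j : V}, (x, j) ∈ (union T3 (union T1 T2)).edges →
        (x, j) ∈ T1.edges ∨ (x, j) ∈ T2.edges ∨ (x, j) ∈ T3.edges := by
      intro x j hx
      rcases Finset.mem_union.mp hx with h | hA
      · exact Or.inr (Or.inr h)
      · rcases Finset.mem_union.mp hA with h | h
        · exact Or.inl h
        · exact Or.inr (Or.inl h)
    refine ⟨disjoint_symm hdU, hne3T,
      ⟨union_connected h3.1 hTps.1 hne3T,
        le_trans h3.2.1 (Finset.card_le_card Finset.subset_union_left),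
        indeg_of_uniq ?_⟩, ?_⟩
    · intro x y j hx hy
      rcases tri hx with hx1 | hx2 | hx3 <;> rcases tri hy with hy1 | hy2 | hy3
      · exact hUniqT x y j (Finset.mem_union_left _ hx1) (Finset.mem_union_left _ hy1)
      · exact hUniqT x y j (Finset.mem_union_left _ hx1) (Finset.mem_union_right _ hy2)
      · exact absurd (T3.mem_snd _ hy3) (fun hh => hv13 (T1.mem_snd _ hx1) hh)
      · exact hUniqT x y j (Finset.mem_union_right _ hx2) (Finset.mem_union_left _ hy1)
      · exact hUniqT x y j (Finset.mem_union_right _ hx2) (Finset.mem_union_right _ hy2)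
      · exact hUniqU2 x y j (Finset.mem_union_right _ hx2) (Finset.mem_union_left _ hy3)
      · exact absurd (T3.mem_snd _ hx3) (fun hh => hv13 (T1.mem_snd _ hy1) hh)
      · exact hUniqU2 x y j (Finset.mem_union_left _ hx3) (Finset.mem_union_right _ hy2)
      · exact hUniq3 x y j hx3 hy3
    · intro r hrm v3 hv3
      have hrT : (union T1 T2).IsRoot r := hrm
      have hA : (union T1 T2).Rch r ρ0 := root_rch hrT ρ0 (Finset.mem_union_right _ hρ0v)
      have hB : (union T3 T2).Rch ρ0 v3 := by
        obtain ⟨l, hl⟩ := hM'.2.2.2 ρ0 hρ0 v3 hv3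
        exact isPath_rch hl
      exact rch_isPath ((rch_mono eTW hA).trans (rch_mono e32W hB))
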